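/- arXiv:math/0505355 — 2 statements merged into one kernel-verified Lean document; each statement's English description precedes it below -/
import Mathlib

section
/- Let λ > 0, β > 0, let f be a probability density on ℝ with characteristic function φ_f, and let g be the probability density with characteristic function φ_g(t) = (e^{λ φ_f(t)} − 1)/(e^λ − 1). If the function t ↦ |t|^β |φ_f(t)| is integrable on ℝ, then the function t ↦ |t|^β |φ_g(t)| is integrable on ℝ. -/
open MeasureTheory Filter

lemma exp_sub_one_norm_le {lam : ℝ} (hlam : 0 ≤ lam) {z : ℂ} (hz : ‖z‖ ≤ lam) :
    ‖Complex.exp z - 1‖ ≤ Real.exp lam * ‖z‖ := by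
  have h := Convex.norm_image_sub_le_of_norm_fderiv_le
    (f := Complex.exp) (s := Metric.closedBall (0 : ℂ) lam) (C := Real.exp lam)
    (fun x _ => Complex.differentiable_exp.differentiableAt)
    (fun x hx => by
      have hfd : fderiv ℂ Complex.exp x
          = ContinuousLinearMap.smulRight (1 : ℂ →L[ℂ] ℂ) (Complex.exp x) :=
        (Complex.hasDerivAt_exp x).hasFDerivAt.fderiv
      rw [hfd]
      have : ‖ContinuousLinearMap.smulRight (1 : ℂ →L[ℂ] ℂ) (Complex.exp x)‖
          = ‖Complex.exp x‖ := by
        rw [ContinuousLinearMap.norm_smulRight_apply]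
        simp
      rw [this, Complex.norm_exp]
      refine Real.exp_le_exp.2 ?_
      have hx' : ‖x‖ ≤ lam := by simpa [Metric.mem_closedBall] using hx
      exact ((le_abs_self _).trans (Complex.abs_re_le_norm x)).trans hx')
    (convex_closedBall _ _)
    (Metric.mem_closedBall_self hlam)
    (by simpa [Metric.mem_closedBall] using hz)
  simpa using h

/-- Let `λ > 0`, `β > 0`, let `f` be a probability density on `ℝ` with
characteristic function `φ_f`, and let `g` be the probability density with characteristic
function `φ_g(t) = (e^{λ φ_f(t)} - 1)/(e^λ - 1)`.  If `t ↦ |t|^β |φ_f(t)|` is integrable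
on `ℝ`, then `t ↦ |t|^β |φ_g(t)|` is integrable on `ℝ`. -/
theorem charFun_compound_integrable
    (lam : ℝ) (hlam : 0 < lam) (β : ℝ) (hβ : 0 < β)
    (f : ℝ → ℝ) (hfmeas : Measurable f) (hfnonneg : ∀ x, 0 ≤ f x)
    (hfint : Integrable f) (hf1 : ∫ x, f x = 1)
    (φf : ℝ → ℂ) (hφf : ∀ t : ℝ, φf t = ∫ x : ℝ, Complex.exp (t * x * Complex.I) * f x)
    (φg : ℝ → ℂ)
    (hφg : ∀ t : ℝ, φg t = (Complex.exp (lam * φf t) - 1) / ((Real.exp lam : ℂ) - 1))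
    (hint : Integrable (fun t : ℝ => |t| ^ β * ‖φf t‖)) :
    Integrable (fun t : ℝ => |t| ^ β * ‖φg t‖) := by
  -- continuity of φf
  have hnorm : ∀ (t x : ℝ), ‖Complex.exp (t * x * Complex.I) * (f x : ℂ)‖ = f x := by
    intro t x
    rw [norm_mul, Complex.norm_exp]
    simp [abs_of_nonneg (hfnonneg x)]
  have hφf_cont : Continuous φf := by
    have : Continuous fun t : ℝ => ∫ x : ℝ, Complex.exp (t * x * Complex.I) * f x := by
      refine continuous_of_dominated (bound := fun x => f x) ?_ ?_ hfint ?_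
      · intro t
        exact (Measurable.aestronglyMeasurable (by fun_prop))
      · intro t
        exact Filter.Eventually.of_forall fun x => le_of_eq (hnorm t x)
      · exact Filter.Eventually.of_forall fun x => by fun_prop
    exact this.congr fun t => (hφf t).symm
  have hφg_cont : Continuous φg := by
    have : Continuous fun t : ℝ =>
        (Complex.exp (lam * φf t) - 1) / ((Real.exp lam : ℂ) - 1) := by
      fun_prop
    exact this.congr fun t => (hφg t).symm
  -- |φf t| ≤ 1
  have hφf_le : ∀ t : ℝ, ‖φf t‖ ≤ 1 := by
    intro t
    rw [hφf t]
    calc ‖∫ x : ℝ, Complex.exp (t * x * Complex.I) * f x‖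
        ≤ ∫ x : ℝ, ‖Complex.exp (t * x * Complex.I) * (f x : ℂ)‖ :=
          norm_integral_le_integral_norm _
      _ = ∫ x : ℝ, f x := by simp_rw [hnorm t]
      _ = 1 := hf1
  have hexp1 : (1 : ℝ) < Real.exp lam := by
    have := Real.add_one_lt_exp (ne_of_gt hlam)
    linarith
  set C : ℝ := Real.exp lam * lam / (Real.exp lam - 1) with hC
  have hbound : ∀ t : ℝ, ‖φg t‖ ≤ C * ‖φf t‖ := by
    intro t
    rw [hφg t, norm_div]
    have hden : ‖((Real.exp lam : ℂ) - 1)‖ = Real.exp lam - 1 := by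
      rw [show ((Real.exp lam : ℂ) - 1) = ((Real.exp lam - 1 : ℝ) : ℂ) by push_cast; ring,
        Complex.norm_real, Real.norm_eq_abs, abs_of_pos (by linarith)]
    rw [hden]
    have hz : ‖(lam : ℂ) * φf t‖ ≤ lam := by
      rw [norm_mul, Complex.norm_real, Real.norm_eq_abs, abs_of_pos hlam]
      nlinarith [hφf_le t, norm_nonneg (φf t)]
    have h1 : ‖Complex.exp ((lam : ℂ) * φf t) - 1‖ ≤ Real.exp lam * (lam * ‖φf t‖) := by
      have := exp_sub_one_norm_le hlam.le hz
      rwa [norm_mul, Complex.norm_real, Real.norm_eq_abs, abs_of_pos hlam] at this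
    have hne : Real.exp lam - 1 ≠ 0 := ne_of_gt (by linarith)
    rw [div_le_iff₀ (by linarith)]
    calc ‖Complex.exp ((lam : ℂ) * φf t) - 1‖ ≤ Real.exp lam * (lam * ‖φf t‖) := h1
      _ = C * ‖φf t‖ * (Real.exp lam - 1) := by
          rw [hC]; field_simp
  refine Integrable.mono' (hint.const_mul C) ?_ ?_
  · exact (Measurable.aestronglyMeasurable (by fun_prop (disch := exact hφg_cont.measurable)))
  · refine Filter.Eventually.of_forall fun t => ?_
    have h0 : (0 : ℝ) ≤ |t| ^ β := Real.rpow_nonneg (abs_nonneg t) β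
    rw [Real.norm_eq_abs, abs_of_nonneg (mul_nonneg h0 (norm_nonneg _))]
    calc |t| ^ β * ‖φg t‖ ≤ |t| ^ β * (C * ‖φf t‖) :=
          mul_le_mul_of_nonneg_left (hbound t) h0
      _ = C * (|t| ^ β * ‖φf t‖) := by ring
end

section
/- Let β, L1, L2 > 0 and l = ⌊β⌋, and let λ > 0. Let f be a probability density on ℝ satisfying Condition F: f ∈ H(β,L1) ∩ N(β,L2), t ↦ |t|^β φ_f(t) is integrable (φ_f the characteristic function of f), and the derivatives f', …, f^{(l)} are integrable. Let g(x) = (e^λ − 1)^{−1} Σ_{n=1}^∞ (λ^n/n!) f^{*n}(x) (f^{*n} the n-fold convolution of f). Then g has derivatives up to order l and g belongs to the Hölder class H(β, L1), i.e. |g^{(l)}(x+t) − g^{(l)}(x)| ≤ L1 |t|^{β−l} for all x, t ∈ ℝ. -/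
open MeasureTheory Filter
open scoped Convolution

/-- Convolution of two functions on `ℝ` (with respect to Lebesgue measure). -/
noncomputable def convolve (f g : ℝ → ℝ) : ℝ → ℝ := fun x => ∫ u, f (x - u) * g u

/-- `convPow f n` is the `n`-fold convolution `f^{*n}` of `f` with itself (`n ≥ 1`);
the value at `n = 0` is irrelevant and set to `0`. -/
noncomputable def convPow (f : ℝ → ℝ) : ℕ → ℝ → ℝ
  | 0 => fun _ => 0
  | 1 => f
  | (n + 2) => convolve (convPow f (n + 1)) f

/-- The Hölder class `H(β, L)`: functions whose derivatives up to order `l = ⌊β⌋` exist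
and whose `l`-th derivative satisfies `|h^{(l)}(x+t) - h^{(l)}(x)| ≤ L |t|^{β - l}`. -/
def HolderClass (β L : ℝ) (h : ℝ → ℝ) : Prop :=
  (∀ k < Nat.floor β, Differentiable ℝ (iteratedDeriv k h)) ∧
  ∀ x t : ℝ, |iteratedDeriv (Nat.floor β) h (x + t) - iteratedDeriv (Nat.floor β) h x|
    ≤ L * |t| ^ (β - (Nat.floor β : ℝ))

/-- The Nikol'ski class `N(β, L)`: functions whose derivatives up to order `l = ⌊β⌋` exist
and whose `l`-th derivative satisfies
`(∫ (h^{(l)}(x+t) - h^{(l)}(x))² dx)^{1/2} ≤ L |t|^{β - l}`. -/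
def NikolskiClass (β L : ℝ) (h : ℝ → ℝ) : Prop :=
  (∀ k < Nat.floor β, Differentiable ℝ (iteratedDeriv k h)) ∧
  ∀ t : ℝ, Real.sqrt (∫ x : ℝ,
      (iteratedDeriv (Nat.floor β) h (x + t) - iteratedDeriv (Nat.floor β) h x) ^ 2)
    ≤ L * |t| ^ (β - (Nat.floor β : ℝ))

/-- A function with globally small oscillation on unit scales which is integrable is bounded. -/
lemma abs_le_of_small_osc {h : ℝ → ℝ} (hint : Integrable h) {L : ℝ}
    (hosc : ∀ x t : ℝ, |t| ≤ 1 → |h (x + t) - h x| ≤ L) (x : ℝ) :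
    |h x| ≤ 2 * L + ∫ y, |h y| := by
  by_contra hM
  push_neg at hM
  have key : ∀ y ∈ Set.Icc (x - 1) (x + 1), |h x| - L ≤ |h y| := by
    intro y hy
    have h1 : |y - x| ≤ 1 := by
      rw [abs_le]; constructor
      · linarith [hy.1]
      · linarith [hy.2]
    have h2 := hosc x (y - x) h1
    rw [show x + (y - x) = y by ring] at h2
    have h3 := abs_sub_abs_le_abs_sub (h x) (h y)
    rw [abs_sub_comm] at h3
    linarith
  have hIcc : (∫ _ in Set.Icc (x - 1) (x + 1), (|h x| - L)) = (|h x| - L) * 2 := by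
    rw [setIntegral_const, measureReal_def, Real.volume_Icc, show x + 1 - (x - 1) = 2 by ring,
      ENNReal.toReal_ofReal (by norm_num), smul_eq_mul]
    ring
  have h2 : (∫ _ in Set.Icc (x - 1) (x + 1), (|h x| - L))
      ≤ ∫ y in Set.Icc (x - 1) (x + 1), |h y| := by
    refine setIntegral_mono_on ?_ hint.abs.integrableOn measurableSet_Icc key
    exact integrableOn_const measure_Icc_lt_top.ne
  have h3 := setIntegral_le_integral (s := Set.Icc (x - 1) (x + 1)) hint.abs
    (Eventually.of_forall fun y => abs_nonneg _)
  rw [hIcc] at h2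
  linarith [abs_nonneg (h x)]

lemma conv_integrable {F : ℝ → ℝ} (hFint : Integrable F) {E : ℝ → ℝ} {CE : ℝ}
    (hEm : Measurable E) (hEb : ∀ y, |E y| ≤ CE) (x : ℝ) :
    Integrable (fun u => F u * E (x - u)) := by
  have hmeas : AEStronglyMeasurable (fun u => F u * E (x - u)) volume :=
    (hFint.aestronglyMeasurable.aemeasurable.mul
      ((hEm.comp (measurable_const.sub measurable_id)).aemeasurable)).aestronglyMeasurable
  refine (hFint.abs.const_mul CE).mono' hmeas ?_
  filter_upwards with u
  rw [Real.norm_eq_abs, abs_mul, mul_comm (CE) (|F u|)]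
  exact mul_le_mul_of_nonneg_left (hEb _) (abs_nonneg _)

lemma conv_hasDerivAt {D D' : ℝ → ℝ} {C C' : ℝ}
    (hD : ∀ x, HasDerivAt D (D' x) x) (hDmeas : Measurable D) (hD'meas : Measurable D')
    (hCb : ∀ y, |D y| ≤ C) (hC'b : ∀ y, |D' y| ≤ C')
    {F : ℝ → ℝ} (hFint : Integrable F) (x : ℝ) :
    HasDerivAt (fun y => ∫ u, F u * D (y - u)) (∫ u, F u * D' (x - u)) x := by
  have key := hasDerivAt_integral_of_dominated_loc_of_deriv_le
    (F := fun y u => F u * D (y - u)) (F' := fun y u => F u * D' (y - u))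
    (bound := fun u => C' * |F u|) (μ := volume) (x₀ := x) (Metric.ball_mem_nhds x zero_lt_one)
    (Eventually.of_forall fun y => (conv_integrable hFint hDmeas hCb y).aestronglyMeasurable)
    (conv_integrable hFint hDmeas hCb x)
    (conv_integrable hFint hD'meas hC'b x).aestronglyMeasurable
    (Eventually.of_forall ?_) (hFint.abs.const_mul C') (Eventually.of_forall ?_)
  · exact key.2
  · intro u y _
    rw [Real.norm_eq_abs, abs_mul]
    calc |F u| * |D' (y - u)| ≤ |F u| * C' := mul_le_mul_of_nonneg_left (hC'b _) (abs_nonneg _)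
      _ = C' * |F u| := mul_comm _ _
  · intro u y _
    have h1 : HasDerivAt (fun y : ℝ => y - u) 1 y := (hasDerivAt_id y).sub_const u
    have h2 := (hD (y - u)).comp y h1
    simpa using h2.const_mul (F u)

lemma abs_integral_le {f : ℝ → ℝ} : |∫ x, f x| ≤ ∫ x, |f x| := by
  simpa [Real.norm_eq_abs] using norm_integral_le_integral_norm (μ := volume) f

/-- part of Lemma 2.1.  Under Condition F on the density `f`
(with `l = ⌊β⌋`), the compound density
`g(x) = (e^λ - 1)⁻¹ ∑_{n=1}^∞ (λ^n/n!) f^{*n}(x)` has derivatives up to order `l` and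
belongs to the Hölder class `H(β, L₁)`. -/
theorem compound_density_holder
    (β L1 L2 lam : ℝ) (hβ : 0 < β) (hL1 : 0 < L1) (hL2 : 0 < L2) (hlam : 0 < lam)
    (f : ℝ → ℝ) (hfmeas : Measurable f) (hfnonneg : ∀ x, 0 ≤ f x)
    (hfint : Integrable f) (hf1 : ∫ x, f x = 1)
    (φf : ℝ → ℂ) (hφf : ∀ t : ℝ, φf t = ∫ x : ℝ, Complex.exp (t * x * Complex.I) * f x)
    -- Condition F:
    (hfH : HolderClass β L1 f) (hfN : NikolskiClass β L2 f)
    (hφfint : Integrable (fun t : ℝ => |t| ^ β * ‖φf t‖))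
    (hderint : ∀ k, 1 ≤ k → k ≤ Nat.floor β → Integrable (iteratedDeriv k f))
    (g : ℝ → ℝ)
    (hg : ∀ x, g x = (Real.exp lam - 1)⁻¹ *
      ∑' n : ℕ, lam ^ (n + 1) / (n + 1).factorial * convPow f (n + 1) x) :
    (∀ k < Nat.floor β, Differentiable ℝ (iteratedDeriv k g)) ∧
    HolderClass β L1 g := by
  classical
  set l := Nat.floor β with hldef
  have hle : (l : ℝ) ≤ β := Nat.floor_le hβ.le
  have he : 0 ≤ β - (l : ℝ) := sub_nonneg.2 hle
  -- basic facts about the derivatives of f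
  have Dmeas : ∀ k, Measurable (iteratedDeriv k f) := by
    intro k
    induction k with
    | zero => simpa [iteratedDeriv_zero] using hfmeas
    | succ k _ => rw [iteratedDeriv_succ]; exact measurable_deriv _
  have Dint : ∀ k, k ≤ l → Integrable (iteratedDeriv k f) := by
    intro k hk
    rcases Nat.eq_zero_or_pos k with h | h
    · subst h; simpa [iteratedDeriv_zero] using hfint
    · exact hderint k h hk
  have Ddiff : ∀ k, k < l → ∀ x, HasDerivAt (iteratedDeriv k f) (iteratedDeriv (k+1) f x) x := by
    intro k hk x
    have h := ((hfH.1 k hk) x).hasDerivAt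
    rw [iteratedDeriv_succ]
    exact h
  have Dhold : ∀ x t : ℝ, |iteratedDeriv l f (x + t) - iteratedDeriv l f x|
      ≤ L1 * |t| ^ (β - (l : ℝ)) := hfH.2
  -- bounds on the derivatives of f
  have Cex : ∀ j k, k + j = l → ∃ C, 0 ≤ C ∧ ∀ x, |iteratedDeriv k f x| ≤ C := by
    intro j
    induction j with
    | zero =>
      intro k hk
      have hkl : k = l := by omega
      rw [hkl]
      refine ⟨2 * L1 + ∫ y, |iteratedDeriv l f y|, ?_, ?_⟩
      · have h0 : 0 ≤ ∫ y, |iteratedDeriv l f y| := integral_nonneg fun y => abs_nonneg _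
        linarith
      · refine abs_le_of_small_osc (Dint l le_rfl) ?_
        intro x t ht
        calc |iteratedDeriv l f (x + t) - iteratedDeriv l f x|
            ≤ L1 * |t| ^ (β - (l : ℝ)) := Dhold x t
          _ ≤ L1 * 1 :=
              mul_le_mul_of_nonneg_left (Real.rpow_le_one (abs_nonneg t) ht he) hL1.le
          _ = L1 := mul_one L1
    | succ j ih =>
      intro k hk
      obtain ⟨C', hC'0, hC'⟩ := ih (k+1) (by omega)
      have hkl : k < l := by omega
      have lip : ∀ x t : ℝ, |t| ≤ 1 → |iteratedDeriv k f (x + t) - iteratedDeriv k f x| ≤ C' := by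
        intro x t ht
        have hmvt := Convex.norm_image_sub_le_of_norm_hasDerivWithin_le
          (f := iteratedDeriv k f) (f' := iteratedDeriv (k+1) f) (s := Set.univ) (C := C')
          (fun y _ => (Ddiff k hkl y).hasDerivWithinAt)
          (fun y _ => by simpa [Real.norm_eq_abs] using hC' y)
          convex_univ (Set.mem_univ x) (Set.mem_univ (x + t))
        rw [Real.norm_eq_abs, Real.norm_eq_abs] at hmvt
        calc |iteratedDeriv k f (x + t) - iteratedDeriv k f x| ≤ C' * |x + t - x| := hmvt
          _ = C' * |t| := by rw [show x + t - x = t by ring]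
          _ ≤ C' * 1 := mul_le_mul_of_nonneg_left ht hC'0
          _ = C' := mul_one C'
      refine ⟨2 * C' + ∫ y, |iteratedDeriv k f y|, ?_, ?_⟩
      · have h0 : 0 ≤ ∫ y, |iteratedDeriv k f y| := integral_nonneg fun y => abs_nonneg _
        linarith
      · exact abs_le_of_small_osc (Dint k (by omega)) lip
  have Cex' : ∀ k : ℕ, ∃ C, 0 ≤ C ∧ (k ≤ l → ∀ x, |iteratedDeriv k f x| ≤ C) := by
    intro k
    by_cases h : k ≤ l
    · obtain ⟨C, h0, hC⟩ := Cex (l - k) k (by omega)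
      exact ⟨C, h0, fun _ => hC⟩
    · exact ⟨0, le_rfl, fun h' => absurd h' h⟩
  choose C hC0 hCb using Cex'
  -- derivatives of a convolution with an integrable function
  have conv_rep : ∀ (F : ℝ → ℝ), Integrable F → ∀ k, k ≤ l →
      iteratedDeriv k (fun y => ∫ u, F u * f (y - u)) =
        fun y => ∫ u, F u * iteratedDeriv k f (y - u) := by
    intro F hF k
    induction k with
    | zero => intro _; simp [iteratedDeriv_zero]
    | succ k ih =>
      intro hk
      have hk' : k < l := by omega
      rw [iteratedDeriv_succ, ih (by omega)]
      funext x
      exact (conv_hasDerivAt (Ddiff k hk') (Dmeas k) (Dmeas (k+1))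
        (hCb k (by omega)) (hCb (k+1) hk) hF x).deriv
  -- basic facts about the convolution powers
  have refl_eq : ∀ (F : ℝ → ℝ) (x : ℝ), convolve F f x = ∫ u, F u * f (x - u) := by
    intro F x
    show (∫ u, F (x - u) * f u) = _
    have h := integral_sub_left_eq_self (fun u => F u * f (x - u)) volume x
    simp only [sub_sub_cancel] at h
    exact h
  have Fprop : ∀ n : ℕ, Integrable (convPow f (n+1)) ∧ (∀ x, 0 ≤ convPow f (n+1) x) ∧
      ∫ x, convPow f (n+1) x = 1 := by
    intro n
    induction n with
    | zero =>
      have h01 : convPow f (0+1) = f := rfl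
      rw [h01]
      exact ⟨hfint, hfnonneg, hf1⟩
    | succ n ih =>
      obtain ⟨hFi, hFn, hF1⟩ := ih
      have heq : convPow f (n+2) = f ⋆[ContinuousLinearMap.mul ℝ ℝ, volume] (convPow f (n+1)) := by
        funext x
        show (∫ u, convPow f (n+1) (x - u) * f u) = _
        rw [MeasureTheory.convolution_def]
        congr 1; funext u
        simp [ContinuousLinearMap.mul_apply', mul_comm]
      refine ⟨?_, ?_, ?_⟩
      · show Integrable (convPow f (n+2))
        rw [heq]
        exact hfint.integrable_convolution _ hFi
      · intro x
        show 0 ≤ ∫ u, convPow f (n+1) (x - u) * f u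
        exact integral_nonneg fun u => mul_nonneg (hFn _) (hfnonneg u)
      · show (∫ x, convPow f (n+2) x) = 1
        rw [heq, integral_convolution]
        · simp [ContinuousLinearMap.mul_apply', hf1, hF1]
        · exact hfint
        · exact hFi
  have rep : ∀ n k, k ≤ l → iteratedDeriv k (convPow f (n+2)) =
      fun x => ∫ u, convPow f (n+1) u * iteratedDeriv k f (x - u) := by
    intro n k hk
    have h1 : convPow f (n+2) = fun x => ∫ u, convPow f (n+1) u * f (x - u) := by
      funext x; exact refl_eq _ x
    rw [h1, conv_rep _ (Fprop n).1 k hk]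
  -- uniform bounds, derivatives and Hölder estimates for the convolution powers
  have Dbd : ∀ n k, k ≤ l → ∀ x, |iteratedDeriv k (convPow f (n+1)) x| ≤ C k := by
    intro n
    cases n with
    | zero =>
      intro k hk x
      have h01 : convPow f (0+1) = f := rfl
      rw [h01]
      exact hCb k hk x
    | succ n =>
      intro k hk x
      obtain ⟨hFi, hFn, hF1⟩ := Fprop n
      show |iteratedDeriv k (convPow f (n+2)) x| ≤ C k
      rw [rep n k hk]
      calc |∫ u, convPow f (n+1) u * iteratedDeriv k f (x - u)|
          ≤ ∫ u, |convPow f (n+1) u * iteratedDeriv k f (x - u)| :=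
            abs_integral_le
        _ ≤ ∫ u, convPow f (n+1) u * C k := by
            refine integral_mono (conv_integrable hFi (Dmeas k) (hCb k hk) x).abs
              (hFi.mul_const _) ?_
            intro u
            show |convPow f (n+1) u * iteratedDeriv k f (x - u)| ≤ convPow f (n+1) u * C k
            rw [abs_mul, abs_of_nonneg (hFn u)]
            exact mul_le_mul_of_nonneg_left (hCb k hk _) (hFn u)
        _ = (∫ u, convPow f (n+1) u) * C k := integral_mul_const _ _
        _ = C k := by rw [hF1, one_mul]
  have DhasD : ∀ n k, k < l → ∀ x, HasDerivAt (iteratedDeriv k (convPow f (n+1)))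
      (iteratedDeriv (k+1) (convPow f (n+1)) x) x := by
    intro n
    cases n with
    | zero =>
      intro k hk x
      have h01 : convPow f (0+1) = f := rfl
      rw [h01]
      exact Ddiff k hk x
    | succ n =>
      intro k hk x
      show HasDerivAt (iteratedDeriv k (convPow f (n+2)))
        (iteratedDeriv (k+1) (convPow f (n+2)) x) x
      rw [rep n k hk.le, rep n (k+1) hk]
      exact conv_hasDerivAt (Ddiff k hk) (Dmeas k) (Dmeas (k+1))
        (hCb k hk.le) (hCb (k+1) hk) (Fprop n).1 x
  have DholdN : ∀ n (x t : ℝ), |iteratedDeriv l (convPow f (n+1)) (x + t) -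
      iteratedDeriv l (convPow f (n+1)) x| ≤ L1 * |t| ^ (β - (l : ℝ)) := by
    intro n
    cases n with
    | zero =>
      intro x t
      have h01 : convPow f (0+1) = f := rfl
      rw [h01]
      exact Dhold x t
    | succ n =>
      intro x t
      obtain ⟨hFi, hFn, hF1⟩ := Fprop n
      show |iteratedDeriv l (convPow f (n+2)) (x + t) -
        iteratedDeriv l (convPow f (n+2)) x| ≤ _
      rw [rep n l le_rfl]
      have hi1 : Integrable (fun u => convPow f (n+1) u * iteratedDeriv l f (x + t - u)) :=
        conv_integrable hFi (Dmeas l) (hCb l le_rfl) (x + t)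
      have hi2 : Integrable (fun u => convPow f (n+1) u * iteratedDeriv l f (x - u)) :=
        conv_integrable hFi (Dmeas l) (hCb l le_rfl) x
      show |(∫ u, convPow f (n+1) u * iteratedDeriv l f (x + t - u)) -
        ∫ u, convPow f (n+1) u * iteratedDeriv l f (x - u)| ≤ _
      rw [← integral_sub hi1 hi2]
      calc |∫ u, (convPow f (n+1) u * iteratedDeriv l f (x + t - u) -
              convPow f (n+1) u * iteratedDeriv l f (x - u))|
          ≤ ∫ u, |convPow f (n+1) u * iteratedDeriv l f (x + t - u) -
              convPow f (n+1) u * iteratedDeriv l f (x - u)| := abs_integral_le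
        _ ≤ ∫ u, convPow f (n+1) u * (L1 * |t| ^ (β - (l : ℝ))) := by
            refine integral_mono (hi1.sub hi2).abs (hFi.mul_const _) ?_
            intro u
            show |convPow f (n+1) u * iteratedDeriv l f (x + t - u) -
              convPow f (n+1) u * iteratedDeriv l f (x - u)| ≤
              convPow f (n+1) u * (L1 * |t| ^ (β - (l : ℝ)))
            rw [← mul_sub, abs_mul, abs_of_nonneg (hFn u)]
            refine mul_le_mul_of_nonneg_left ?_ (hFn u)
            have h := Dhold (x - u) t
            rw [show x - u + t = x + t - u by ring] at h
            exact h
        _ = (∫ u, convPow f (n+1) u) * (L1 * |t| ^ (β - (l : ℝ))) := integral_mul_const _ _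
        _ = L1 * |t| ^ (β - (l : ℝ)) := by rw [hF1, one_mul]
  -- the series defining g
  set c := Real.exp lam - 1 with hcdef
  have hc : 0 < c := by
    have h := Real.add_one_lt_exp (ne_of_gt hlam)
    rw [hcdef]; linarith
  set a : ℕ → ℝ := fun n => lam ^ (n+1) / ((n+1).factorial : ℝ) with hadef
  have hg' : ∀ x, g x = c⁻¹ * ∑' n, a n * convPow f (n+1) x := by
    intro x
    rw [hg x]
  have ha0 : ∀ n, 0 ≤ a n := fun n =>
    div_nonneg (pow_nonneg hlam.le _) (Nat.cast_nonneg _)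
  have haS : Summable a := (Real.summable_pow_div_factorial lam).comp_injective Nat.succ_injective
  have haT : ∑' n, a n = c := by
    have h0 : Summable (fun n : ℕ => lam ^ n / (n.factorial : ℝ)) :=
      Real.summable_pow_div_factorial lam
    have hexp : Real.exp lam = ∑' n : ℕ, lam ^ n / (n.factorial : ℝ) := by
      rw [Real.exp_eq_exp_ℝ, NormedSpace.exp_eq_tsum_div]
    rw [hcdef, hexp, Summable.tsum_eq_zero_add h0]
    simp [hadef]
  have hsum : ∀ k, k ≤ l → ∀ x,
      Summable (fun n => a n * iteratedDeriv k (convPow f (n+1)) x) := by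
    intro k hk x
    refine Summable.of_norm_bounded (g := fun n => a n * C k) (haS.mul_right _) ?_
    intro n
    rw [Real.norm_eq_abs, abs_mul, abs_of_nonneg (ha0 n)]
    exact mul_le_mul_of_nonneg_left (Dbd n k hk x) (ha0 n)
  have hT : ∀ k, k < l → ∀ x, HasDerivAt
      (fun y => ∑' n, a n * iteratedDeriv k (convPow f (n+1)) y)
      (∑' n, a n * iteratedDeriv (k+1) (convPow f (n+1)) x) x := by
    intro k hk x
    refine hasDerivAt_tsum (u := fun n => a n * C (k+1)) (haS.mul_right _)
      (fun n y => (DhasD n k hk y).const_mul (a n)) ?_ (hsum k hk.le 0) x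
    intro n y
    rw [Real.norm_eq_abs, abs_mul, abs_of_nonneg (ha0 n)]
    exact mul_le_mul_of_nonneg_left (Dbd n (k+1) hk y) (ha0 n)
  have hgT : ∀ k, k ≤ l → iteratedDeriv k g =
      fun x => c⁻¹ * ∑' n, a n * iteratedDeriv k (convPow f (n+1)) x := by
    intro k
    induction k with
    | zero =>
      intro _
      funext x
      rw [iteratedDeriv_zero, hg' x]
      congr 1
    | succ k ih =>
      intro hk
      have hk' : k < l := by omega
      rw [iteratedDeriv_succ, ih hk'.le]
      funext x
      exact ((hT k hk' x).const_mul c⁻¹).deriv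
  have hdiffg : ∀ k < l, Differentiable ℝ (iteratedDeriv k g) := by
    intro k hk
    rw [hgT k hk.le]
    intro x
    exact ((hT k hk x).const_mul c⁻¹).differentiableAt
  refine ⟨hdiffg, hdiffg, ?_⟩
  intro x t
  rw [hgT l le_rfl]
  show |c⁻¹ * (∑' n, a n * iteratedDeriv l (convPow f (n+1)) (x + t)) -
      c⁻¹ * (∑' n, a n * iteratedDeriv l (convPow f (n+1)) x)| ≤ L1 * |t| ^ (β - (l : ℝ))
  have s1 := hsum l le_rfl (x + t)
  have s2 := hsum l le_rfl x
  have hb : ∀ n, ‖a n * iteratedDeriv l (convPow f (n+1)) (x + t) -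
      a n * iteratedDeriv l (convPow f (n+1)) x‖ ≤ a n * (L1 * |t| ^ (β - (l : ℝ))) := by
    intro n
    rw [Real.norm_eq_abs, ← mul_sub, abs_mul, abs_of_nonneg (ha0 n)]
    exact mul_le_mul_of_nonneg_left (DholdN n x t) (ha0 n)
  have hsn : Summable (fun n => ‖a n * iteratedDeriv l (convPow f (n+1)) (x + t) -
      a n * iteratedDeriv l (convPow f (n+1)) x‖) :=
    Summable.of_nonneg_of_le (fun n => norm_nonneg _) hb (haS.mul_right _)
  have habs : |∑' n, (a n * iteratedDeriv l (convPow f (n+1)) (x + t) -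
      a n * iteratedDeriv l (convPow f (n+1)) x)| ≤ c * (L1 * |t| ^ (β - (l : ℝ))) := by
    calc |∑' n, (a n * iteratedDeriv l (convPow f (n+1)) (x + t) -
          a n * iteratedDeriv l (convPow f (n+1)) x)|
        ≤ ∑' n, ‖a n * iteratedDeriv l (convPow f (n+1)) (x + t) -
          a n * iteratedDeriv l (convPow f (n+1)) x‖ := by
          rw [← Real.norm_eq_abs]
          exact norm_tsum_le_tsum_norm hsn
      _ ≤ ∑' n, a n * (L1 * |t| ^ (β - (l : ℝ))) :=
          Summable.tsum_le_tsum hb hsn (haS.mul_right _)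
      _ = (∑' n, a n) * (L1 * |t| ^ (β - (l : ℝ))) := tsum_mul_right
      _ = c * (L1 * |t| ^ (β - (l : ℝ))) := by rw [haT]
  calc |c⁻¹ * (∑' n, a n * iteratedDeriv l (convPow f (n+1)) (x + t)) -
      c⁻¹ * (∑' n, a n * iteratedDeriv l (convPow f (n+1)) x)|
      = c⁻¹ * |∑' n, (a n * iteratedDeriv l (convPow f (n+1)) (x + t) -
          a n * iteratedDeriv l (convPow f (n+1)) x)| := by
        rw [← mul_sub, abs_mul, abs_of_nonneg (inv_nonneg.2 hc.le), Summable.tsum_sub s1 s2]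
    _ ≤ c⁻¹ * (c * (L1 * |t| ^ (β - (l : ℝ)))) :=
        mul_le_mul_of_nonneg_left habs (inv_nonneg.2 hc.le)
    _ = L1 * |t| ^ (β - (l : ℝ)) := by field_simp
end
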